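/- arXiv:1608.05432 — 4 statements merged into one kernel-verified Lean document; each statement's English description precedes it below -/
import Mathlib

section
/- Let X and Y be sets and let R ⊆ X × Y be a nonempty relation. Define E_R = {finite nonempty σ ⊆ X : ∃ y, ∀ x ∈ σ, (x,y) ∈ R} and F_R similarly with roles of X and Y swapped. Then the geometric realizations |E_R| and |F_R| are homotopy equivalent. -/
/-!
The coordinates `sdCoord p` of a point `p` of `|E_R|` in the barycentric subdivision are given by
the layer-cake formula, which makes them continuous on every simplex. Sending each superlevel set
`σ` of `p` to a witness `y` with `σ × {y} ⊆ R` defines `Φ : |E_R| → |F_R|`, and symmetrically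
`Ψ : |F_R| → |E_R|`. To see `Ψ ∘ Φ ≃ id`, pass through the second subdivision: `Φ` is homotopic
to `Φ₂`, which spreads each chain of superlevel sets uniformly over their witnesses, `Ψ ∘ Φ₂` is
homotopic to the map `I` sending each chain to a vertex common to all its members, and `I ≃ id`.
All three are straight-line homotopies, legitimate because both ends send every point into a
common simplex; in the middle one, that simplex is witnessed by the witness of the heaviest
simplex `σ₀` of the first subdivision.
-/

/-- The closed geometric simplex on the finite vertex set `σ`, inside `V → ℝ`. -/
def simplexSet {V : Type*} (σ : Finset V) : Set (V → ℝ) :=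
  {f | (∀ v, v ∉ σ → f v = 0) ∧ (∀ v, 0 ≤ f v) ∧ ∑ v ∈ σ, f v = 1}

/-- The underlying set of the geometric realization of `K`. -/
def realizationSet {V : Type*} (K : Set (Finset V)) : Set (V → ℝ) :=
  {f | ∃ σ ∈ K, f ∈ simplexSet σ}

/-- The geometric realization of the simplicial complex `K`. -/
def Realization {V : Type*} (K : Set (Finset V)) : Type _ := realizationSet K

/-- The geometric realization carries the weak topology: the final topology determined
by the family of closed simplices. -/
instance realizationTopology {V : Type*} (K : Set (Finset V)) :
    TopologicalSpace (Realization K) :=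
  ⨆ σ : {σ : Finset V // σ ∈ K},
    TopologicalSpace.coinduced
      (fun f : simplexSet σ.1 => (⟨f.1, σ.1, σ.2, f.2⟩ : Realization K))
      inferInstance

lemma realization_mono {V : Type*} {K L : Set (Finset V)} (h : K ⊆ L) :
    realizationSet K ⊆ realizationSet L := fun _ ⟨σ, hσ, hf⟩ => ⟨σ, h hσ, hf⟩

/-- The continuous inclusion of geometric realizations induced by an inclusion of
simplicial complexes. -/
noncomputable def inclusionMap {V : Type*} {K L : Set (Finset V)} (h : K ⊆ L) :
    C(Realization K, Realization L) where
  toFun := fun p => ⟨p.1, realization_mono h p.2⟩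
  continuous_toFun := by
    refine continuous_iSup_dom.mpr fun σ => ?_
    refine continuous_coinduced_dom.mpr ?_
    refine continuous_iff_coinduced_le.mpr ?_
    exact le_iSup (fun τ : {σ : Finset V // σ ∈ L} =>
      TopologicalSpace.coinduced
        (fun f : simplexSet τ.1 => (⟨f.1, τ.1, τ.2, f.2⟩ : Realization L))
        inferInstance) ⟨σ.1, h σ.2⟩

/-- The Dowker complex `E_R` of a relation `R ⊆ X × Y`. -/
def dowkerE {X Y : Type*} (R : Set (X × Y)) : Set (Finset X) :=
  {σ | σ.Nonempty ∧ ∃ y : Y, ∀ x ∈ σ, (x, y) ∈ R}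

/-- The Dowker complex `F_R` of a relation `R ⊆ X × Y`. -/
def dowkerF {X Y : Type*} (R : Set (X × Y)) : Set (Finset Y) :=
  {τ | τ.Nonempty ∧ ∃ x : X, ∀ y ∈ τ, (x, y) ∈ R}

open Function MeasureTheory Set

section Simplex

variable {V : Type*}

theorem simplexSet_mono {σ σ' : Finset V} (h : σ ⊆ σ') : simplexSet σ ⊆ simplexSet σ' :=
  fun _ ⟨hout, hnonneg, hsum⟩ =>
    ⟨fun v hv => hout v (fun hvσ => hv (h hvσ)), hnonneg,
      (Finset.sum_subset h fun v _ hv => hout v hv) ▸ hsum⟩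

theorem convex_simplexSet (σ : Finset V) : Convex ℝ (simplexSet σ) := by
  intro f ⟨hfout, hfnonneg, hfsum⟩ g ⟨hgout, hgnonneg, hgsum⟩ a b ha hb hab
  refine ⟨fun v hv => by simp [hfout v hv, hgout v hv], fun v => ?_, ?_⟩
  · simp only [Pi.add_apply, Pi.smul_apply, smul_eq_mul]
    exact add_nonneg (mul_nonneg ha (hfnonneg v)) (mul_nonneg hb (hgnonneg v))
  · simp only [Pi.add_apply, Pi.smul_apply, smul_eq_mul, Finset.sum_add_distrib,
      ← Finset.mul_sum, hfsum, hgsum, hab, mul_one]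

theorem isClosed_simplexSet (σ : Finset V) : IsClosed (simplexSet σ) := by
  simp only [simplexSet, ofPred_and, ofPred_forall]
  exact (isClosed_iInter fun v => isClosed_iInter fun _ =>
      isClosed_eq (continuous_apply v) continuous_const).inter
    ((isClosed_iInter fun v => isClosed_le continuous_const (continuous_apply v)).inter
      (isClosed_eq (continuous_finsetSum _ fun v _ => continuous_apply v) continuous_const))

theorem pos_of_ne_zero_of_mem_simplexSet {σ : Finset V} {f : V → ℝ} (hf : f ∈ simplexSet σ)
    {v : V} (hv : f v ≠ 0) : 0 < f v :=
  (hf.2.1 v).lt_of_ne' hv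

theorem mem_of_ne_zero_of_mem_simplexSet {σ : Finset V} {f : V → ℝ} (hf : f ∈ simplexSet σ)
    {v : V} (hv : f v ≠ 0) : v ∈ σ :=
  by_contra fun hvσ => hv (hf.1 v hvσ)

theorem exists_ne_zero_of_mem_simplexSet {σ : Finset V} {f : V → ℝ} (hf : f ∈ simplexSet σ) :
    ∃ v ∈ σ, f v ≠ 0 :=
  Finset.exists_ne_zero_of_sum_ne_zero (hf.2.2 ▸ one_ne_zero)

theorem exists_forall_le_of_mem_simplexSet {σ : Finset V} {f : V → ℝ} (hf : f ∈ simplexSet σ) :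
    ∃ v, 0 < f v ∧ ∀ w, f w ≤ f v := by
  obtain ⟨u, hu, hfu⟩ := exists_ne_zero_of_mem_simplexSet hf
  obtain ⟨v, -, hv⟩ := σ.exists_max_image f ⟨u, hu⟩
  refine ⟨v, (pos_of_ne_zero_of_mem_simplexSet hf hfu).trans_le (hv u hu), fun w => ?_⟩
  by_cases hw : w ∈ σ
  · exact hv w hw
  · exact (hf.1 w hw).trans_le ((hf.2.1 u).trans (hv u hu))

end Simplex

section Realization

variable {V V' : Type*} {K : Set (Finset V)} {L : Set (Finset V')}

def simplexToRealization (σ : Finset V) (hσ : σ ∈ K) : C(simplexSet σ, Realization K) where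
  toFun f := ⟨f.1, σ, hσ, f.2⟩
  continuous_toFun := continuous_iff_coinduced_le.2 <| le_iSup (fun τ : {σ : Finset V // σ ∈ K} =>
    TopologicalSpace.coinduced (fun f : simplexSet τ.1 => (⟨f.1, τ.1, τ.2, f.2⟩ : Realization K))
      inferInstance) ⟨σ, hσ⟩

theorem continuous_of_forall_simplex {Z : Type*} [TopologicalSpace Z] {f : Realization K → Z}
    (h : ∀ σ (hσ : σ ∈ K), Continuous (f ∘ simplexToRealization σ hσ)) : Continuous f :=
  continuous_iSup_dom.2 fun σ => continuous_coinduced_dom.2 (h σ.1 σ.2)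

theorem continuous_realization_val : Continuous fun p : Realization K => (p.1 : V → ℝ) :=
  continuous_of_forall_simplex fun _ _ => continuous_subtype_val

theorem isClosed_image_val_inter_simplexSet {C : Set (Realization L)} (hC : IsClosed C)
    {ρ : Finset V'} (hρ : ρ ∈ L) : IsClosed (Subtype.val '' C ∩ simplexSet ρ) := by
  have : Subtype.val '' C ∩ simplexSet ρ =
      Subtype.val '' (simplexToRealization ρ hρ ⁻¹' C) := by
    ext f
    constructor
    · rintro ⟨⟨p, hpC, rfl⟩, hp⟩
      exact ⟨⟨p.1, hp⟩, hpC, rfl⟩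
    · rintro ⟨u, huC, rfl⟩
      exact ⟨⟨_, huC, rfl⟩, u.2⟩
  rw [this]
  exact (isClosed_simplexSet ρ).isClosedMap_subtype_val _ (hC.preimage (map_continuous _))

/-- As only finitely many simplices of `L` are met, closedness of a preimage can be tested in the
ambient space one simplex at a time. -/
theorem continuous_to_realization {A : Type*} [TopologicalSpace A] {f : A → Realization L}
    (hf : Continuous fun a => (f a).1) (U : Finset V')
    (hU : ∀ a, ∃ ρ ∈ L, ρ ⊆ U ∧ (f a).1 ∈ simplexSet ρ) : Continuous f := by
  classical
  refine continuous_iff_isClosed.2 fun C hC => ?_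
  have : f ⁻¹' C = ⋃ ρ ∈ U.powerset.filter (· ∈ L),
      (fun a => (f a).1) ⁻¹' (Subtype.val '' C ∩ simplexSet ρ) := by
    ext a
    simp only [mem_preimage, mem_iUnion, Finset.mem_filter, Finset.mem_powerset, exists_prop,
      mem_inter_iff]
    constructor
    · intro haC
      obtain ⟨ρ, hρ, hρU, ha⟩ := hU a
      exact ⟨ρ, ⟨hρU, hρ⟩, Subtype.val_injective.mem_set_image.2 haC, ha⟩
    · rintro ⟨ρ, -, haC, -⟩
      exact Subtype.val_injective.mem_set_image.1 haC
  rw [this]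
  exact isClosed_biUnion_finset fun ρ hρ =>
    (isClosed_image_val_inter_simplexSet hC (Finset.mem_filter.1 hρ).2).preimage hf

theorem continuous_prod_of_forall_simplex {Z : Type*} [TopologicalSpace Z]
    {H : unitInterval × Realization K → Z}
    (h : ∀ σ (hσ : σ ∈ K), Continuous fun z : simplexSet σ × unitInterval =>
      H (z.2, simplexToRealization σ hσ z.1)) : Continuous H := by
  have hpath : ∀ p, Continuous fun t => H (t, p) := by
    rintro ⟨p, σ, hσ, hp⟩
    exact (h σ hσ).comp (Continuous.prodMk (continuous_const (y := ⟨p, hp⟩)) continuous_id)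
  let G : Realization K → C(unitInterval, Z) := fun p => ⟨fun t => H (t, p), hpath p⟩
  have hG : Continuous G :=
    continuous_of_forall_simplex fun σ hσ => (ContinuousMap.curry ⟨_, h σ hσ⟩).continuous
  exact (ContinuousMap.uncurry ⟨G, hG⟩).continuous.comp continuous_swap

def realizationMap (F : (V → ℝ) → V' → ℝ) (hcont : ∀ τ ∈ K, ContinuousOn F (simplexSet τ))
    (hbound : ∀ τ ∈ K, ∃ U : Finset V', ∀ p ∈ simplexSet τ,
      ∃ ρ ∈ L, ρ ⊆ U ∧ F p ∈ simplexSet ρ) :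
    C(Realization K, Realization L) where
  toFun p := ⟨F p.1, by
    obtain ⟨τ, hτ, hp⟩ := p.2
    obtain ⟨U, hU⟩ := hbound τ hτ
    obtain ⟨ρ, hρ, -, hFp⟩ := hU _ hp
    exact ⟨ρ, hρ, hFp⟩⟩
  continuous_toFun := continuous_of_forall_simplex fun τ hτ => by
    obtain ⟨U, hU⟩ := hbound τ hτ
    exact continuous_to_realization
      ((hcont τ hτ).comp_continuous continuous_subtype_val Subtype.prop) U fun u => hU u.1 u.2

theorem homotopic_of_forall_simplex (f g : C(Realization K, Realization L))
    (h : ∀ τ ∈ K, ∃ U : Finset V', ∀ p : Realization K, p.1 ∈ simplexSet τ →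
      ∃ ρ ∈ L, ρ ⊆ U ∧ (f p).1 ∈ simplexSet ρ ∧ (g p).1 ∈ simplexSet ρ) :
    f.Homotopic g := by
  have hseg : ∀ (t : unitInterval) (p : Realization K),
      (1 - (t : ℝ)) • (f p).1 + (t : ℝ) • (g p).1 ∈ realizationSet L := by
    rintro t p
    obtain ⟨τ, hτ, hp⟩ := p.2
    obtain ⟨U, hU⟩ := h τ hτ
    obtain ⟨ρ, hρ, -, hf, hg⟩ := hU p hp
    exact ⟨ρ, hρ, convex_simplexSet ρ hf hg (sub_nonneg.2 t.2.2) t.2.1 (sub_add_cancel 1 _)⟩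
  refine ⟨{
    toFun := fun z => ⟨_, hseg z.1 z.2⟩
    continuous_toFun := continuous_prod_of_forall_simplex fun τ hτ => ?_
    map_zero_left := fun p => Subtype.ext (by simp)
    map_one_left := fun p => Subtype.ext (by simp) }⟩
  obtain ⟨U, hU⟩ := h τ hτ
  refine continuous_to_realization ?_ U fun z => ?_
  · have hval : ∀ f : C(Realization K, Realization L), Continuous
        fun z : simplexSet τ × unitInterval => (f (simplexToRealization τ hτ z.1)).1 :=
      fun f => continuous_realization_val.comp ((map_continuous f).comp
        ((map_continuous _).comp continuous_fst))
    have ht : Continuous fun z : simplexSet τ × unitInterval => (z.2 : ℝ) :=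
      continuous_subtype_val.comp continuous_snd
    exact ((continuous_const.sub ht).smul (hval f)).add (ht.smul (hval g))
  · obtain ⟨ρ, hρ, hρU, hf, hg⟩ := hU (simplexToRealization τ hτ z.1) z.1.2
    exact ⟨ρ, hρ, hρU, convex_simplexSet ρ hf hg (sub_nonneg.2 z.2.2.2) z.2.2.1
      (sub_add_cancel 1 _)⟩

end Realization

section Mixture

variable {A B : Type*}

noncomputable def barycenter (s : Finset B) : B → ℝ := (s : Set B).indicator fun _ => (s.card : ℝ)⁻¹

theorem barycenter_mem_simplexSet {s : Finset B} (hs : s.Nonempty) :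
    barycenter s ∈ simplexSet s := by
  refine ⟨fun b hb => indicator_of_notMem hb _,
    fun b => indicator_nonneg (fun _ _ => by positivity) b, ?_⟩
  have hconst : ∀ b ∈ s, barycenter s b = (s.card : ℝ)⁻¹ := fun b hb =>
    indicator_of_mem (Finset.mem_coe.2 hb) _
  rw [Finset.sum_congr rfl hconst, Finset.sum_const,
    nsmul_eq_mul, mul_inv_cancel₀ (Nat.cast_ne_zero.2 hs.card_pos.ne')]

theorem barycenter_le {s : Finset B} {b₀ : B} (hb₀ : b₀ ∈ s) (b : B) :
    barycenter s b ≤ barycenter s b₀ := by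
  rw [barycenter, indicator_of_mem (Finset.mem_coe.2 hb₀)]
  exact indicator_le_self' (fun _ _ => by positivity) b

noncomputable def mix (w : A → ℝ) (ν : A → B → ℝ) : B → ℝ := fun b => ∑ᶠ a, w a * ν a b

theorem mix_eq_sum {S : Finset A} {w : A → ℝ} (hw : w ∈ simplexSet S) (ν : A → B → ℝ) (b : B) :
    mix w ν b = ∑ a ∈ S, w a * ν a b :=
  finsum_eq_sum_of_support_subset _ fun _ ha =>
    mem_of_ne_zero_of_mem_simplexSet hw (left_ne_zero_of_mul ha)

theorem mix_mem_simplexSet {S : Finset A} {T : Finset B} {w : A → ℝ} {ν : A → B → ℝ}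
    (hw : w ∈ simplexSet S) (hν : ∀ a ∈ S, w a ≠ 0 → ν a ∈ simplexSet T) :
    mix w ν ∈ simplexSet T := by
  have hterm : ∀ a ∈ S, ∀ b, (b ∉ T → w a * ν a b = 0) ∧ 0 ≤ w a * ν a b := fun a ha b => by
    by_cases hwa : w a = 0
    · simp [hwa]
    · exact ⟨fun hb => by rw [(hν a ha hwa).1 b hb, mul_zero],
        mul_nonneg (hw.2.1 a) ((hν a ha hwa).2.1 b)⟩
  refine ⟨fun b hb => ?_, fun b => ?_, ?_⟩
  · rw [mix_eq_sum hw]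
    exact Finset.sum_eq_zero fun a ha => (hterm a ha b).1 hb
  · rw [mix_eq_sum hw]
    exact Finset.sum_nonneg fun a ha => (hterm a ha b).2
  · have hmass : ∀ a ∈ S, ∑ b ∈ T, w a * ν a b = w a := fun a ha => by
      by_cases hwa : w a = 0
      · simp [hwa]
      · rw [← Finset.mul_sum, (hν a ha hwa).2.2, mul_one]
    simp_rw [mix_eq_sum hw]
    rw [Finset.sum_comm, Finset.sum_congr rfl hmass, hw.2.2]

theorem mix_le_mix {S : Finset A} {w : A → ℝ} {ν : A → B → ℝ} (hw : w ∈ simplexSet S)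
    {b b₀ : B} (h : ∀ a ∈ S, w a ≠ 0 → ν a b ≤ ν a b₀) : mix w ν b ≤ mix w ν b₀ := by
  rw [mix_eq_sum hw, mix_eq_sum hw]
  refine Finset.sum_le_sum fun a ha => ?_
  by_cases hwa : w a = 0
  · simp [hwa]
  · exact mul_le_mul_of_nonneg_left (h a ha hwa) (hw.2.1 a)

theorem continuousOn_mix (ν : A → B → ℝ) (S : Finset A) :
    ContinuousOn (fun w => mix w ν) (simplexSet S) := by
  refine continuousOn_pi.2 fun b => ?_
  refine (continuous_finsetSum S fun a _ =>
    (continuous_apply a).mul continuous_const).continuousOn.congr fun w hw => mix_eq_sum hw ν b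

end Mixture

section Subdivision

variable {W B : Type*}

def layer (q : W → ℝ) (σ : Finset W) : Set ℝ := {t | 0 ≤ t ∧ ∀ y, y ∈ σ ↔ t < q y}

/-- The coordinates of `q` in the barycentric subdivision: by the layer-cake formula
`q = ∑ σ, sdCoord q σ • barycenter σ`, where only the chain of superlevel sets of `q` counts. -/
noncomputable def sdCoord (q : W → ℝ) (σ : Finset W) : ℝ := σ.card * volume.real (layer q σ)

theorem measurableSet_layer (q : W → ℝ) (σ : Finset W) : MeasurableSet (layer q σ) := by
  have : layer q σ = Ici 0 ∩ ⋂ y, {t | y ∈ σ ↔ t < q y} := by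
    ext
    simp [layer]
  rw [this]
  refine OrdConnected.measurableSet (ordConnected_Ici.inter (ordConnected_iInter fun y => ?_))
  by_cases hy : y ∈ σ
  · simp only [hy, true_iff]
    exact ordConnected_Iio
  · simp only [hy, false_iff, not_lt]
    exact ordConnected_Ici

theorem pairwise_disjoint_layer (q : W → ℝ) : Pairwise (Disjoint on layer q) :=
  fun _ _ hne => disjoint_left.2 fun _ ht ht' =>
    hne (Finset.ext fun y => (ht.2 y).trans (ht'.2 y).symm)

theorem layer_subset_Ico {q : W → ℝ} {σ : Finset W} {x : W} (hx : x ∈ σ) :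
    layer q σ ⊆ Ico 0 (q x) :=
  fun _ ht => ⟨ht.1, (ht.2 x).1 hx⟩

theorem sum_volume_layer [DecidableEq W] {τ : Finset W} {q : W → ℝ} (hq : q ∈ simplexSet τ)
    {x : W} (hx : x ∈ τ) : ∑ σ ∈ τ.powerset.filter (x ∈ ·), volume.real (layer q σ) = q x := by
  have hunion : ⋃ σ ∈ τ.powerset.filter (x ∈ ·), layer q σ = Ico 0 (q x) := by
    ext t
    simp only [mem_iUnion, Finset.mem_filter, Finset.mem_powerset, exists_prop]
    constructor
    · rintro ⟨σ, ⟨-, hxσ⟩, ht⟩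
      exact layer_subset_Ico hxσ ht
    · rintro ⟨ht0, htx⟩
      refine ⟨τ.filter (t < q ·), ⟨Finset.filter_subset _ _, Finset.mem_filter.2 ⟨hx, htx⟩⟩,
        ht0, fun y => ?_⟩
      rw [Finset.mem_filter, and_iff_right_iff_imp]
      exact fun hty => mem_of_ne_zero_of_mem_simplexSet hq (ht0.trans_lt hty).ne'
  rw [← measureReal_biUnion_finset ((pairwise_disjoint_layer q).set_pairwise _)
    (fun σ _ => measurableSet_layer q σ) fun σ hσ => ne_top_of_le_ne_top measure_Ico_lt_top.ne
      (measure_mono (layer_subset_Ico (Finset.mem_filter.1 hσ).2)),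
    hunion, Real.volume_real_Ico_of_le (hq.2.1 x), sub_zero]

theorem sum_sdCoord {τ : Finset W} {q : W → ℝ} (hq : q ∈ simplexSet τ) :
    ∑ σ ∈ τ.powerset, sdCoord q σ = 1 := by
  classical
  calc ∑ σ ∈ τ.powerset, sdCoord q σ
      = ∑ σ ∈ τ.powerset, ∑ _x ∈ σ, volume.real (layer q σ) := by
        simp only [sdCoord, Finset.sum_const, nsmul_eq_mul]
    _ = ∑ x ∈ τ, ∑ σ ∈ τ.powerset.filter (x ∈ ·), volume.real (layer q σ) :=
        Finset.sum_comm' fun σ x => by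
          simp only [Finset.mem_powerset, Finset.mem_filter]
          exact ⟨fun h => ⟨h, h.1 h.2⟩, fun h => h.1⟩
    _ = ∑ x ∈ τ, q x := Finset.sum_congr rfl fun x hx => sum_volume_layer hq hx
    _ = 1 := hq.2.2

theorem nonempty_of_sdCoord_ne_zero {q : W → ℝ} {σ : Finset W} (h : sdCoord q σ ≠ 0) :
    σ.Nonempty ∧ (layer q σ).Nonempty :=
  ⟨Finset.card_pos.1 (Nat.cast_pos.1 ((Nat.cast_nonneg _).lt_of_ne' (left_ne_zero_of_mul h))),
    nonempty_iff_ne_empty.2 fun he => right_ne_zero_of_mul h (by rw [he, measureReal_empty])⟩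

theorem pos_of_sdCoord_ne_zero {q : W → ℝ} {σ : Finset W} (h : sdCoord q σ ≠ 0) {y : W}
    (hy : y ∈ σ) : 0 < q y :=
  let ⟨_, ht0, ht⟩ := (nonempty_of_sdCoord_ne_zero h).2
  ht0.trans_lt ((ht y).1 hy)

theorem mem_of_sdCoord_ne_zero {q : W → ℝ} {σ : Finset W} (h : sdCoord q σ ≠ 0) {x : W}
    (hx : ∀ y, q y ≤ q x) : x ∈ σ := by
  obtain ⟨⟨y, hy⟩, t, -, ht⟩ := nonempty_of_sdCoord_ne_zero h
  exact (ht x).2 (((ht y).1 hy).trans_le (hx y))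

theorem subset_of_sdCoord_ne_zero {τ : Finset W} {q : W → ℝ} (hq : q ∈ simplexSet τ)
    {σ : Finset W} (h : sdCoord q σ ≠ 0) : σ ⊆ τ :=
  fun _ hy => mem_of_ne_zero_of_mem_simplexSet hq (pos_of_sdCoord_ne_zero h hy).ne'

theorem sdCoord_mem_simplexSet {τ : Finset W} {q : W → ℝ} (hq : q ∈ simplexSet τ) :
    sdCoord q ∈ simplexSet τ.powerset :=
  ⟨fun _ hσ => by_contra fun h => hσ (Finset.mem_powerset.2 (subset_of_sdCoord_ne_zero hq h)),
    fun _ => mul_nonneg (Nat.cast_nonneg _) measureReal_nonneg, sum_sdCoord hq⟩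

theorem layer_eq_Ico [DecidableEq W] {τ σ : Finset W} {q : W → ℝ} (hq : q ∈ simplexSet τ)
    (hσ : σ.Nonempty) {a : ℝ} (ha : ∀ t, a ≤ t ↔ 0 ≤ t ∧ ∀ y ∈ τ \ σ, q y ≤ t) :
    layer q σ = Ico a (σ.inf' hσ q) := by
  ext t
  rw [mem_Ico, ha, Finset.lt_inf'_iff, and_assoc]
  refine and_congr_right fun ht0 => ⟨fun h => ⟨fun y hy => not_lt.1 fun hlt =>
    (Finset.mem_sdiff.1 hy).2 ((h y).2 hlt), fun y hy => (h y).1 hy⟩, fun ⟨hout, hin⟩ y =>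
    ⟨hin y, fun hlt => by_contra fun hyσ => ?_⟩⟩
  by_cases hyτ : y ∈ τ
  · exact (hout y (Finset.mem_sdiff.2 ⟨hyτ, hyσ⟩)).not_gt hlt
  · exact (hq.1 y hyτ ▸ hlt).not_ge ht0

theorem continuousOn_volume_layer [DecidableEq W] {τ σ : Finset W} (hσ : σ.Nonempty) :
    ContinuousOn (fun q => volume.real (layer q σ)) (simplexSet τ) := by
  have hinf : Continuous fun q : W → ℝ => σ.inf' hσ q :=
    Continuous.finset_inf'_apply hσ fun y _ => continuous_apply y
  by_cases hrest : (τ \ σ).Nonempty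
  · have hsup : Continuous fun q : W → ℝ => (τ \ σ).sup' hrest q :=
      Continuous.finset_sup'_apply hrest fun y _ => continuous_apply y
    refine ((hinf.sub hsup).max (continuous_const (y := (0 : ℝ)))).continuousOn.congr
      fun q hq => ?_
    have ha : ∀ t, (τ \ σ).sup' hrest q ≤ t ↔ 0 ≤ t ∧ ∀ y ∈ τ \ σ, q y ≤ t := fun t => by
      rw [Finset.sup'_le_iff]
      exact ⟨fun h => ⟨(hq.2.1 _).trans (h _ hrest.choose_spec), h⟩, And.right⟩
    rw [layer_eq_Ico hq hσ ha, Real.volume_real_Ico]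
    rfl
  · refine (hinf.max (continuous_const (y := (0 : ℝ)))).continuousOn.congr fun q hq => ?_
    have ha : ∀ t, 0 ≤ t ↔ 0 ≤ t ∧ ∀ y ∈ τ \ σ, q y ≤ t := fun t => by
      simp [Finset.not_nonempty_iff_eq_empty.1 hrest]
    rw [layer_eq_Ico hq hσ ha, Real.volume_real_Ico, sub_zero]

theorem continuousOn_sdCoord (τ : Finset W) : ContinuousOn sdCoord (simplexSet τ) := by
  classical
  refine continuousOn_pi.2 fun σ => ?_
  obtain rfl | hσ := σ.eq_empty_or_nonempty
  · simpa [sdCoord] using continuousOn_const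
  · exact continuousOn_const.mul (continuousOn_volume_layer hσ)

theorem continuousOn_mix_sdCoord (ν : Finset W → B → ℝ) (τ : Finset W) :
    ContinuousOn (fun q => mix (sdCoord q) ν) (simplexSet τ) :=
  (continuousOn_mix ν τ.powerset).comp (continuousOn_sdCoord τ) fun _ hq =>
    sdCoord_mem_simplexSet hq

theorem continuousOn_mix_sdCoord_sdCoord (ν : Finset (Finset W) → B → ℝ) (τ : Finset W) :
    ContinuousOn (fun q => mix (sdCoord (sdCoord q)) ν) (simplexSet τ) :=
  (continuousOn_mix_sdCoord ν τ.powerset).comp (continuousOn_sdCoord τ) fun _ hq =>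
    sdCoord_mem_simplexSet hq

end Subdivision

section Dowker

variable {X Y : Type*}

theorem mem_dowkerE_of_subset {R : Set (X × Y)} {σ τ : Finset X} (hτ : τ ∈ dowkerE R)
    (hστ : σ ⊆ τ) (hσ : σ.Nonempty) : σ ∈ dowkerE R :=
  let ⟨_, y, hy⟩ := hτ
  ⟨hσ, y, fun x hx => hy x (hστ hx)⟩

noncomputable def witness (R : Set (X × Y)) [Nonempty Y] (σ : Finset X) : Y :=
  Classical.epsilon fun y => ∀ x ∈ σ, (x, y) ∈ R

theorem witness_spec {R : Set (X × Y)} [Nonempty Y] {σ : Finset X} (hσ : σ ∈ dowkerE R) :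
    ∀ x ∈ σ, (x, witness R σ) ∈ R :=
  Classical.epsilon_spec hσ.2

noncomputable def commonVertex [Nonempty X] (c : Finset (Finset X)) : X :=
  Classical.epsilon fun x => ∀ σ ∈ c, x ∈ σ

theorem commonVertex_mem [Nonempty X] {c : Finset (Finset X)} (h : ∃ x, ∀ σ ∈ c, x ∈ σ) :
    ∀ σ ∈ c, commonVertex c ∈ σ :=
  Classical.epsilon_spec h

noncomputable def dowkerFun (R : Set (X × Y)) [Nonempty Y] (p : X → ℝ) : Y → ℝ :=
  mix (sdCoord p) fun σ => barycenter {witness R σ}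

open Classical in
noncomputable def dowkerFun₂ (R : Set (X × Y)) [Nonempty Y] (p : X → ℝ) : Y → ℝ :=
  mix (sdCoord (sdCoord p)) fun c => barycenter (c.image (witness R))

noncomputable def commonVertexFun [Nonempty X] (p : X → ℝ) : X → ℝ :=
  mix (sdCoord (sdCoord p)) fun c => barycenter {commonVertex c}

open Classical in
noncomputable def witnessSimplex (R : Set (X × Y)) [Nonempty Y] (τ : Finset X) (p : X → ℝ) :
    Finset Y :=
  (τ.powerset.filter (sdCoord p · ≠ 0)).image (witness R)

variable {R : Set (X × Y)} {τ : Finset X} {p : X → ℝ}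

theorem mem_witnessSimplex [Nonempty Y] {y : Y} :
    y ∈ witnessSimplex R τ p ↔ ∃ σ ⊆ τ, sdCoord p σ ≠ 0 ∧ witness R σ = y := by
  simp [witnessSimplex, and_assoc]

theorem witness_rel_of_forall_le [Nonempty Y] (hτ : τ ∈ dowkerE R)
    {x : X} (hx : ∀ x', p x' ≤ p x) : ∀ y ∈ witnessSimplex R τ p, (x, y) ∈ R := by
  intro y hy
  obtain ⟨σ, hστ, hσ, rfl⟩ := mem_witnessSimplex.1 hy
  exact witness_spec (mem_dowkerE_of_subset hτ hστ (nonempty_of_sdCoord_ne_zero hσ).1) x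
    (mem_of_sdCoord_ne_zero hσ hx)

theorem witnessSimplex_mem_dowkerF [Nonempty Y] (hp : p ∈ simplexSet τ) (hτ : τ ∈ dowkerE R) :
    witnessSimplex R τ p ∈ dowkerF R := by
  obtain ⟨x, -, hx⟩ := exists_forall_le_of_mem_simplexSet hp
  obtain ⟨σ, hσ, hne⟩ := exists_ne_zero_of_mem_simplexSet (sdCoord_mem_simplexSet hp)
  exact ⟨⟨_, mem_witnessSimplex.2 ⟨σ, Finset.mem_powerset.1 hσ, hne, rfl⟩⟩, x,
    witness_rel_of_forall_le hτ hx⟩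

theorem dowkerFun_mem_simplexSet [Nonempty Y] (hp : p ∈ simplexSet τ) :
    dowkerFun R p ∈ simplexSet (witnessSimplex R τ p) :=
  mix_mem_simplexSet (sdCoord_mem_simplexSet hp) fun σ hσ hne =>
    simplexSet_mono (Finset.singleton_subset_iff.2
      (mem_witnessSimplex.2 ⟨σ, Finset.mem_powerset.1 hσ, hne, rfl⟩))
      (barycenter_mem_simplexSet (Finset.singleton_nonempty _))

theorem dowkerFun₂_mem_simplexSet [Nonempty Y] (hp : p ∈ simplexSet τ) :
    dowkerFun₂ R p ∈ simplexSet (witnessSimplex R τ p) := by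
  classical
  refine mix_mem_simplexSet (sdCoord_mem_simplexSet (sdCoord_mem_simplexSet hp))
    fun c _ hc => simplexSet_mono (fun y hy => ?_)
      (barycenter_mem_simplexSet ((nonempty_of_sdCoord_ne_zero hc).1.image _))
  obtain ⟨σ, hσ, rfl⟩ := Finset.mem_image.1 hy
  have hσ' : sdCoord p σ ≠ 0 := (pos_of_sdCoord_ne_zero hc hσ).ne'
  exact mem_witnessSimplex.2 ⟨σ, subset_of_sdCoord_ne_zero hp hσ', hσ', rfl⟩

theorem exists_bound_dowkerFun_dowkerFun₂ [Nonempty Y] (hτ : τ ∈ dowkerE R) :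
    ∃ U : Finset Y, ∀ p ∈ simplexSet τ, ∃ ρ ∈ dowkerF R, ρ ⊆ U ∧
      dowkerFun R p ∈ simplexSet ρ ∧ dowkerFun₂ R p ∈ simplexSet ρ := by
  classical
  refine ⟨τ.powerset.image (witness R), fun p hp => ⟨_, witnessSimplex_mem_dowkerF hp hτ,
    fun y hy => ?_, dowkerFun_mem_simplexSet hp, dowkerFun₂_mem_simplexSet hp⟩⟩
  obtain ⟨σ, hστ, -, rfl⟩ := mem_witnessSimplex.1 hy
  exact Finset.mem_image_of_mem _ (Finset.mem_powerset.2 hστ)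

/-- Every chain carrying weight contains `σ₀`, so its common vertex lies in `σ₀`. -/
theorem commonVertexFun_mem_simplexSet_of_forall_le [Nonempty X] (hp : p ∈ simplexSet τ)
    {σ₀ : Finset X} (hσ₀ : ∀ σ, sdCoord p σ ≤ sdCoord p σ₀) :
    commonVertexFun p ∈ simplexSet σ₀ := by
  obtain ⟨x, -, hx⟩ := exists_forall_le_of_mem_simplexSet hp
  refine mix_mem_simplexSet (sdCoord_mem_simplexSet (sdCoord_mem_simplexSet hp))
    fun c _ hc => simplexSet_mono (Finset.singleton_subset_iff.2 ?_)
      (barycenter_mem_simplexSet (Finset.singleton_nonempty _))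
  exact commonVertex_mem
    ⟨x, fun σ hσ => mem_of_sdCoord_ne_zero (pos_of_sdCoord_ne_zero hc hσ).ne' hx⟩ σ₀
    (mem_of_sdCoord_ne_zero hc hσ₀)

theorem commonVertexFun_mem_simplexSet [Nonempty X] (hp : p ∈ simplexSet τ) :
    commonVertexFun p ∈ simplexSet τ :=
  let ⟨_, hσ₀pos, hσ₀⟩ := exists_forall_le_of_mem_simplexSet (sdCoord_mem_simplexSet hp)
  simplexSet_mono (subset_of_sdCoord_ne_zero hp hσ₀pos.ne')
    (commonVertexFun_mem_simplexSet_of_forall_le hp hσ₀)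

theorem exists_bound_comp_dowkerFun₂_commonVertexFun [Nonempty X] [Nonempty Y]
    (hτ : τ ∈ dowkerE R) :
    ∃ U : Finset X, ∀ p ∈ simplexSet τ, ∃ D ∈ dowkerE R, D ⊆ U ∧
      dowkerFun (Prod.swap ⁻¹' R) (dowkerFun₂ R p) ∈ simplexSet D ∧
      commonVertexFun p ∈ simplexSet D := by
  classical
  refine ⟨τ ∪ (τ.powerset.image (witness R)).powerset.image (witness (Prod.swap ⁻¹' R)),
    fun p hp => ?_⟩
  obtain ⟨σ₀, hσ₀pos, hσ₀⟩ := exists_forall_le_of_mem_simplexSet (sdCoord_mem_simplexSet hp)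
  have hσ₀τ : σ₀ ⊆ τ := subset_of_sdCoord_ne_zero hp hσ₀pos.ne'
  have hσ₀E : σ₀ ∈ dowkerE R :=
    mem_dowkerE_of_subset hτ hσ₀τ (nonempty_of_sdCoord_ne_zero hσ₀pos.ne').1
  have hq := dowkerFun₂_mem_simplexSet (R := R) hp
  -- `witness R σ₀` maximizes `dowkerFun₂ R p`, so it lies in each of its superlevel sets
  have hmax : ∀ y, dowkerFun₂ R p y ≤ dowkerFun₂ R p (witness R σ₀) := fun y =>
    mix_le_mix (sdCoord_mem_simplexSet (sdCoord_mem_simplexSet hp)) fun c _ hc =>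
      barycenter_le (Finset.mem_image_of_mem _ (mem_of_sdCoord_ne_zero hc hσ₀)) y
  refine ⟨σ₀ ∪ witnessSimplex (Prod.swap ⁻¹' R) (witnessSimplex R τ p) (dowkerFun₂ R p),
    ⟨(nonempty_of_sdCoord_ne_zero hσ₀pos.ne').1.mono Finset.subset_union_left, witness R σ₀,
      fun x hx => ?_⟩, Finset.union_subset_union hσ₀τ fun x hx => ?_,
    simplexSet_mono Finset.subset_union_right (dowkerFun_mem_simplexSet hq),
    simplexSet_mono Finset.subset_union_left (commonVertexFun_mem_simplexSet_of_forall_le hp hσ₀)⟩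
  · rcases Finset.mem_union.1 hx with hx | hx
    · exact witness_spec hσ₀E x hx
    · exact witness_rel_of_forall_le (R := Prod.swap ⁻¹' R) (witnessSimplex_mem_dowkerF hp hτ)
        hmax x hx
  · obtain ⟨T, hT, -, rfl⟩ := mem_witnessSimplex.1 hx
    refine Finset.mem_image_of_mem _ (Finset.mem_powerset.2 fun y hy => ?_)
    obtain ⟨σ, hστ, -, rfl⟩ := mem_witnessSimplex.1 (hT hy)
    exact Finset.mem_image_of_mem _ (Finset.mem_powerset.2 hστ)

end Dowker

section DowkerMaps

variable {X Y : Type*} (R : Set (X × Y))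

noncomputable def dowkerMap [Nonempty Y] : C(Realization (dowkerE R), Realization (dowkerF R)) :=
  realizationMap (dowkerFun R) (fun τ _ => continuousOn_mix_sdCoord _ τ) fun _ hτ =>
    let ⟨U, hU⟩ := exists_bound_dowkerFun_dowkerFun₂ hτ
    ⟨U, fun p hp => let ⟨ρ, hρ, hρU, h, _⟩ := hU p hp; ⟨ρ, hρ, hρU, h⟩⟩

noncomputable def dowkerMap₂ [Nonempty Y] : C(Realization (dowkerE R), Realization (dowkerF R)) :=
  realizationMap (dowkerFun₂ R) (fun τ _ => continuousOn_mix_sdCoord_sdCoord _ τ) fun _ hτ =>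
    let ⟨U, hU⟩ := exists_bound_dowkerFun_dowkerFun₂ hτ
    ⟨U, fun p hp => let ⟨ρ, hρ, hρU, _, h⟩ := hU p hp; ⟨ρ, hρ, hρU, h⟩⟩

noncomputable def commonVertexMap [Nonempty X] (K : Set (Finset X)) :
    C(Realization K, Realization K) :=
  realizationMap commonVertexFun (fun τ _ => continuousOn_mix_sdCoord_sdCoord _ τ) fun τ hτ =>
    ⟨τ, fun _ hp => ⟨τ, hτ, subset_rfl, commonVertexFun_mem_simplexSet hp⟩⟩

theorem dowkerMap_homotopic_dowkerMap₂ [Nonempty Y] : (dowkerMap R).Homotopic (dowkerMap₂ R) :=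
  homotopic_of_forall_simplex _ _ fun _ hτ =>
    let ⟨U, hU⟩ := exists_bound_dowkerFun_dowkerFun₂ hτ
    ⟨U, fun p hp => hU p.1 hp⟩

theorem comp_dowkerMap₂_homotopic_commonVertexMap [Nonempty X] [Nonempty Y] :
    ((dowkerMap (Prod.swap ⁻¹' R)).comp (dowkerMap₂ R)).Homotopic
      (commonVertexMap (dowkerE R)) :=
  homotopic_of_forall_simplex _ _ fun _ hτ =>
    let ⟨U, hU⟩ := exists_bound_comp_dowkerFun₂_commonVertexFun hτ
    ⟨U, fun p hp => hU p.1 hp⟩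

theorem commonVertexMap_homotopic_id [Nonempty X] (K : Set (Finset X)) :
    (commonVertexMap K).Homotopic (ContinuousMap.id _) :=
  homotopic_of_forall_simplex _ _ fun τ hτ =>
    ⟨τ, fun _ hp => ⟨τ, hτ, subset_rfl, commonVertexFun_mem_simplexSet hp, hp⟩⟩

theorem dowkerMap_comp_homotopic_id [Nonempty X] [Nonempty Y] :
    ((dowkerMap (Prod.swap ⁻¹' R)).comp (dowkerMap R)).Homotopic (ContinuousMap.id _) :=
  ((ContinuousMap.Homotopic.refl _).comp (dowkerMap_homotopic_dowkerMap₂ R)).trans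
    ((comp_dowkerMap₂_homotopic_commonVertexMap R).trans (commonVertexMap_homotopic_id _))

end DowkerMaps

/-- **The strong form of Dowker's theorem.** For any nonempty relation `R ⊆ X × Y`, the
geometric realizations of the Dowker complexes `E_R` and `F_R` are homotopy equivalent. -/
theorem strong_dowker_theorem {X Y : Type*} (R : Set (X × Y)) (hR : R.Nonempty) :
    Nonempty (ContinuousMap.HomotopyEquiv (Realization (dowkerE R)) (Realization (dowkerF R))) := by
  obtain ⟨⟨x, y⟩, -⟩ := hR
  have : Nonempty X := ⟨x⟩
  have : Nonempty Y := ⟨y⟩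
  exact ⟨⟨dowkerMap R, dowkerMap (Prod.swap ⁻¹' R), dowkerMap_comp_homotopic_id R,
    dowkerMap_comp_homotopic_id (Prod.swap ⁻¹' R)⟩⟩
end

section
/- Let (X, ω_X) and (Y, ω_Y) be finite networks (finite sets with arbitrary real-valued weight functions ω : X × X → ℝ). Then the network distance d_N(X,Y) = (1/2) min over correspondences R ⊆ X×Y of dis(R) equals (1/2) times the infimum, over all pairs of maps φ : X → Y and ψ : Y → X, of max(dis(φ), dis(ψ), C_{X,Y}(φ,ψ), C_{Y,X}(ψ,φ)). -/
/-- A correspondence between `X` and `Y`: a relation whose projections to `X` and `Y` are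
both surjective. -/
def IsCorrespondence {X Y : Type*} (R : Set (X × Y)) : Prop :=
  (∀ x : X, ∃ y : Y, (x, y) ∈ R) ∧ (∀ y : Y, ∃ x : X, (x, y) ∈ R)

/-- The distortion of a relation `R ⊆ X × Y` between two networks. -/
noncomputable def relDis {X Y : Type*} (ωX : X → X → ℝ) (ωY : Y → Y → ℝ)
    (R : Set (X × Y)) : ℝ :=
  sSup {d : ℝ | ∃ p ∈ R, ∃ q ∈ R, d = |ωX p.1 q.1 - ωY p.2 q.2|}

/-- The network distance between two networks. -/
noncomputable def netDist {X Y : Type*} (ωX : X → X → ℝ) (ωY : Y → Y → ℝ) : ℝ :=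
  (1 / 2) * sInf {d : ℝ | ∃ R : Set (X × Y), IsCorrespondence R ∧ d = relDis ωX ωY R}

/-- The distortion of a map between two networks. -/
noncomputable def mapDis {X Y : Type*} (ωX : X → X → ℝ) (ωY : Y → Y → ℝ) (φ : X → Y) : ℝ :=
  ⨆ p : X × X, |ωX p.1 p.2 - ωY (φ p.1) (φ p.2)|

/-- The codistortion `C_{X,Y}(φ,ψ)` of a pair of maps between two networks. -/
noncomputable def codis {X Y : Type*} (ωX : X → X → ℝ) (ωY : Y → Y → ℝ)
    (φ : X → Y) (ψ : Y → X) : ℝ :=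
  ⨆ p : X × Y, |ωX p.1 (ψ p.2) - ωY (φ p.1) p.2|

set_option linter.unusedSectionVars false

section Aux

variable {X Y : Type*} [Fintype X] [Fintype Y] [Nonempty X] [Nonempty Y]
  (ωX : X → X → ℝ) (ωY : Y → Y → ℝ)

lemma relSet_finite (R : Set (X × Y)) :
    {d : ℝ | ∃ p ∈ R, ∃ q ∈ R, d = |ωX p.1 q.1 - ωY p.2 q.2|}.Finite := by
  apply Set.Finite.subset
    (Set.finite_range (fun pq : (X × Y) × (X × Y) =>
      |ωX pq.1.1 pq.2.1 - ωY pq.1.2 pq.2.2|))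
  rintro d ⟨p, hp, q, hq, rfl⟩
  exact ⟨(p, q), rfl⟩

lemma le_relDis {R : Set (X × Y)} {p q : X × Y} (hp : p ∈ R) (hq : q ∈ R) :
    |ωX p.1 q.1 - ωY p.2 q.2| ≤ relDis ωX ωY R :=
  le_csSup (relSet_finite ωX ωY R).bddAbove ⟨p, hp, q, hq, rfl⟩

lemma relDis_le {R : Set (X × Y)} {M : ℝ} (hR : R.Nonempty)
    (h : ∀ p ∈ R, ∀ q ∈ R, |ωX p.1 q.1 - ωY p.2 q.2| ≤ M) :
    relDis ωX ωY R ≤ M := by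
  apply csSup_le
  · obtain ⟨p, hp⟩ := hR
    exact ⟨_, p, hp, p, hp, rfl⟩
  · rintro d ⟨p, hp, q, hq, rfl⟩
    exact h p hp q hq

lemma le_mapDis (φ : X → Y) (x x' : X) :
    |ωX x x' - ωY (φ x) (φ x')| ≤ mapDis ωX ωY φ := by
  unfold mapDis
  exact le_ciSup (Set.finite_range fun p : X × X => |ωX p.1 p.2 - ωY (φ p.1) (φ p.2)|).bddAbove (x, x')

lemma mapDis_le {φ : X → Y} {M : ℝ}
    (h : ∀ x x', |ωX x x' - ωY (φ x) (φ x')| ≤ M) : mapDis ωX ωY φ ≤ M :=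
  ciSup_le fun p => h p.1 p.2

lemma le_codis (φ : X → Y) (ψ : Y → X) (x : X) (y : Y) :
    |ωX x (ψ y) - ωY (φ x) y| ≤ codis ωX ωY φ ψ := by
  unfold codis
  exact le_ciSup (Set.finite_range fun p : X × Y => |ωX p.1 (ψ p.2) - ωY (φ p.1) p.2|).bddAbove (x, y)

lemma codis_le {φ : X → Y} {ψ : Y → X} {M : ℝ}
    (h : ∀ x y, |ωX x (ψ y) - ωY (φ x) y| ≤ M) : codis ωX ωY φ ψ ≤ M :=
  ciSup_le fun p => h p.1 p.2

end Aux

/-- **Reformulation of the network distance via pairs of maps** (the network analogue of the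
Kalton–Ostrovskii formula). -/
theorem netDist_eq_maps {X Y : Type*} [Fintype X] [Fintype Y] [Nonempty X] [Nonempty Y]
    (ωX : X → X → ℝ) (ωY : Y → Y → ℝ) :
    netDist ωX ωY =
      (1 / 2) * sInf {d : ℝ | ∃ (φ : X → Y) (ψ : Y → X),
        d = max (max (mapDis ωX ωY φ) (mapDis ωY ωX ψ))
              (max (codis ωX ωY φ ψ) (codis ωY ωX ψ φ))} := by
  set A := {d : ℝ | ∃ R : Set (X × Y), IsCorrespondence R ∧ d = relDis ωX ωY R}
  set B := {d : ℝ | ∃ (φ : X → Y) (ψ : Y → X),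
        d = max (max (mapDis ωX ωY φ) (mapDis ωY ωX ψ))
              (max (codis ωX ωY φ ψ) (codis ωY ωX ψ φ))}
  have hAne : A.Nonempty := by
    refine ⟨relDis ωX ωY Set.univ, Set.univ, ⟨?_, ?_⟩, rfl⟩
    · exact fun x => ⟨Classical.arbitrary Y, trivial⟩
    · exact fun y => ⟨Classical.arbitrary X, trivial⟩
  have hBne : B.Nonempty :=
    ⟨_, fun _ => Classical.arbitrary Y, fun _ => Classical.arbitrary X, rfl⟩
  have hAbdd : BddBelow A := by
    refine ⟨0, ?_⟩
    rintro d ⟨R, hR, rfl⟩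
    obtain ⟨y0, hy0⟩ := hR.1 (Classical.arbitrary X)
    exact le_trans (abs_nonneg _) (le_relDis ωX ωY hy0 hy0)
  have hBbdd : BddBelow B := by
    refine ⟨0, ?_⟩
    rintro d ⟨φ, ψ, rfl⟩
    have := le_mapDis ωX ωY φ (Classical.arbitrary X) (Classical.arbitrary X)
    have h0 : (0:ℝ) ≤ mapDis ωX ωY φ := le_trans (abs_nonneg _) this
    exact le_trans h0 (le_max_left _ _ |>.trans (le_max_left _ _))
  have key : sInf A = sInf B := by
    apply le_antisymm
    · -- from a pair of maps, build a correspondence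
      apply le_csInf hBne
      rintro d ⟨φ, ψ, rfl⟩
      set R : Set (X × Y) :=
        Set.range (fun x => (x, φ x)) ∪ Set.range (fun y => (ψ y, y)) with hRdef
      have hcorr : IsCorrespondence R :=
        ⟨fun x => ⟨φ x, Or.inl ⟨x, rfl⟩⟩, fun y => ⟨ψ y, Or.inr ⟨y, rfl⟩⟩⟩
      have hRne : R.Nonempty := ⟨_, Or.inl ⟨Classical.arbitrary X, rfl⟩⟩
      refine le_trans (csInf_le hAbdd ⟨R, hcorr, rfl⟩) ?_
      apply relDis_le ωX ωY hRne
      rintro p (⟨x, rfl⟩ | ⟨y, rfl⟩) q (⟨x', rfl⟩ | ⟨y', rfl⟩) <;> simp only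
      · exact le_trans (le_mapDis ωX ωY φ x x')
          ((le_max_left _ _).trans (le_max_left _ _))
      · exact le_trans (le_codis ωX ωY φ ψ x y')
          ((le_max_left _ _).trans (le_max_right _ _))
      · rw [abs_sub_comm]
        exact le_trans (le_codis ωY ωX ψ φ y x')
          ((le_max_right _ _).trans (le_max_right _ _))
      · rw [abs_sub_comm]
        exact le_trans (le_mapDis ωY ωX ψ y y')
          ((le_max_right _ _).trans (le_max_left _ _))
    · -- from a correspondence, build a pair of maps
      apply le_csInf hAne
      rintro d ⟨R, hR, rfl⟩
      choose φ hφ using hR.1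
      choose ψ hψ using hR.2
      refine le_trans (csInf_le hBbdd ⟨φ, ψ, rfl⟩) ?_
      apply max_le <;> apply max_le
      · exact mapDis_le ωX ωY fun x x' => le_relDis ωX ωY (hφ x) (hφ x')
      · apply mapDis_le ωY ωX
        intro y y'
        rw [abs_sub_comm]
        exact le_relDis ωX ωY (hψ y) (hψ y')
      · exact codis_le ωX ωY fun x y => le_relDis ωX ωY (hφ x) (hψ y)
      · apply codis_le ωY ωX
        intro y x
        rw [abs_sub_comm]
        exact le_relDis ωX ωY (hψ y) (hφ x)
  rw [netDist, key]
end

section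
/- For n ≥ 3, let G_n be the cycle network: vertex set {x_1, …, x_n} with ω(x_i, x_j) = (j − i) mod n (the shortest directed path length in the directed n-cycle with unit weights). For 1 ≤ δ < 2, the Dowker sink complex D^si_{δ,G_n} contains no 2-simplices; i.e., no three distinct vertices admit a common δ-sink. -/
/-- The weight function of the cycle network `G_n` on vertex set `Fin n`:
`ω(i, j)` is the number of forward steps from `i` to `j` around the directed `n`-cycle,
i.e. `(j - i) mod n`. -/
noncomputable def cycOmega (n : ℕ) [NeZero n] : Fin n → Fin n → ℝ :=
  fun i j => (((j - i : Fin n) : ℕ) : ℝ)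

/-! Since `v ↦ s - v` is injective, three distinct vertices give three distinct offsets `s - v`,
and at most two elements of `Fin n` have value below `2`. -/

lemma Fin.two_le_val_of_pairwise_ne {n : ℕ} {x y z : Fin n}
    (hxy : x ≠ y) (hxz : x ≠ z) (hyz : y ≠ z) : 2 ≤ x.val ∨ 2 ≤ y.val ∨ 2 ≤ z.val := by
  rw [Ne, Fin.ext_iff] at hxy hxz hyz
  omega

lemma two_le_cycOmega_of_pairwise_ne {n : ℕ} [NeZero n] {a b c : Fin n}
    (hab : a ≠ b) (hac : a ≠ c) (hbc : b ≠ c) (s : Fin n) :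
    2 ≤ cycOmega n a s ∨ 2 ≤ cycOmega n b s ∨ 2 ≤ cycOmega n c s := by
  have hinj : Function.Injective (s - · : Fin n → Fin n) := sub_right_injective
  unfold cycOmega
  exact_mod_cast Fin.two_le_val_of_pairwise_ne (hinj.ne hab) (hinj.ne hac) (hinj.ne hbc)

theorem cycle_no_two_simplices_general (n : ℕ) [NeZero n]
    (δ : ℝ) (h2 : δ < 2) :
    ∀ a b c : Fin n, a ≠ b → a ≠ c → b ≠ c →
      ¬ ∃ s : Fin n, cycOmega n a s ≤ δ ∧ cycOmega n b s ≤ δ ∧ cycOmega n c s ≤ δ := by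
  rintro a b c hab hac hbc ⟨s, ha, hb, hc⟩
  rcases two_le_cycOmega_of_pairwise_ne hab hac hbc s with h | h | h <;> linarith

/-- **No 2-simplices in the Dowker sink complex of a cycle network for `1 ≤ δ < 2`:**
no three distinct vertices admit a common `δ`-sink. -/
theorem cycle_no_two_simplices (n : ℕ) [NeZero n] (hn : 3 ≤ n)
    (δ : ℝ) (h1 : 1 ≤ δ) (h2 : δ < 2) :
    ∀ a b c : Fin n, a ≠ b → a ≠ c → b ≠ c →
      ¬ ∃ s : Fin n, cycOmega n a s ≤ δ ∧ cycOmega n b s ≤ δ ∧ cycOmega n c s ≤ δ :=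
  cycle_no_two_simplices_general n δ h2
end

section
/- Let n ∈ ℕ and let 𝕏_n ⊆ S¹ be n equally spaced points on the circle of unit circumference with the arc-length metric, and let G_n be the directed cycle network on the same n points with ω(x_i,x_j) = (j−i) mod n. Then for every δ ∈ [0,1], the Čech complex Č(𝕏_n, δ/2) (nerve of closed balls of radius δ/2 centered at the points of 𝕏_n, with intersections taken in S¹) equals the Dowker sink complex D^si_{nδ, G_n}. -/
/-- The Dowker sink complex of a network `(X, ω)` at resolution `δ`. -/
def dowkerSink {X : Type*} (ω : X → X → ℝ) (δ : ℝ) : Set (Finset X) :=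
  {σ | σ.Nonempty ∧ ∃ x' : X, ∀ x ∈ σ, ω x x' ≤ δ}

/-- The `i`-th of `n` equally spaced points on the circle `S¹ = ℝ/ℤ` of unit circumference. -/
noncomputable def circlePoint (n : ℕ) (i : Fin n) : AddCircle (1 : ℝ) :=
  (((i : ℕ) : ℝ) / (n : ℝ) : ℝ)

/-- The Čech complex at radius `ε` of the `n` equally spaced points `𝕏_n ⊆ S¹`: the nerve of
the closed balls of radius `ε` centered at the points, with intersections taken in `S¹`. -/
noncomputable def cechCircle (n : ℕ) (ε : ℝ) : Set (Finset (Fin n)) :=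
  {σ | σ.Nonempty ∧ ∃ c : AddCircle (1 : ℝ), ∀ i ∈ σ, dist (circlePoint n i) c ≤ ε}

/-! Scaling the circle by `n`, the point `i / n` becomes the class `i + nℤ`, and a closed ball of
radius `nδ/2` around a point becomes a union of translates of a window `[T - nδ, T]`. Lowering `T`
to `⌊T⌋` loses no integer of the window, so the centre may be taken to be `m / n - δ / 2` with `m`
an integer. The class `i + nℤ` meets `[m - nδ, m]` exactly when its largest element below `m`,
namely `m - (m - i) mod n`, does; that is, when the forward distance from `i` to the sink `m` in
the cycle network is at most `nδ`. -/

theorem AddCircle.dist_coe_le_iff {p : ℝ} (x y ε : ℝ) :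
    dist (y : AddCircle p) (x : AddCircle p) ≤ ε ↔ ∃ k : ℤ, |y - (x + k * p)| ≤ ε := by
  simpa [Real.dist_eq, zsmul_eq_mul] using
    Set.ext_iff.mp (AddCircle.coe_real_preimage_closedBall_eq_iUnion (p := p) x ε) y

theorem Int.emod_le_self_of_nonneg {a b : ℤ} (ha : 0 ≤ a) (hb : b ≠ 0) : a % b ≤ a := by
  rcases lt_or_ge a |b| with h | h
  · rw [← Int.emod_abs, Int.emod_eq_of_lt ha h]
  · have := Int.emod_lt a hb
    rw [Int.abs_eq_natAbs] at h
    omega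

theorem Int.exists_modEq_mem_window_iff {n : ℤ} (hn : n ≠ 0) (a m : ℤ) (w : ℝ) :
    (∃ z : ℤ, z ≡ a [ZMOD n] ∧ (m : ℝ) - w ≤ z ∧ z ≤ m) ↔ (((m - a) % n : ℤ) : ℝ) ≤ w := by
  constructor
  · rintro ⟨z, hz, hwz, hzm⟩
    have hzm' : z ≤ m := by exact_mod_cast hzm
    calc (((m - a) % n : ℤ) : ℝ) = (((m - z) % n : ℤ) : ℝ) := by rw [(hz.sub_left m).eq]
      _ ≤ ((m - z : ℤ) : ℝ) := by gcongr; exact Int.emod_le_self_of_nonneg (by omega) hn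
      _ ≤ w := by push_cast; linarith
  · intro h
    refine ⟨m - (m - a) % n, ?_, ?_, ?_⟩
    · simpa using ((Int.mod_modEq (m - a) n).sub_left m)
    · push_cast; linarith
    · have := Int.emod_nonneg (m - a) hn
      exact_mod_cast (by omega : m - (m - a) % n ≤ m)

theorem exists_real_window_iff_exists_int_window {ι : Type*} (s : Set ι) (P : ι → ℤ → Prop)
    (w : ℝ) :
    (∃ c : ℝ, ∀ j ∈ s, ∃ z, P j z ∧ |(z : ℝ) - c| ≤ w / 2) ↔
      ∃ m : ℤ, ∀ j ∈ s, ∃ z, P j z ∧ (m : ℝ) - w ≤ z ∧ z ≤ m := by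
  constructor
  · rintro ⟨c, hc⟩
    refine ⟨⌊c + w / 2⌋, fun j hj => ?_⟩
    obtain ⟨z, hz, hzc⟩ := hc j hj
    rw [abs_le] at hzc
    refine ⟨z, hz, ?_, ?_⟩
    · linarith [Int.floor_le (c + w / 2)]
    · exact_mod_cast Int.le_floor.mpr (by linarith)
  · rintro ⟨m, hm⟩
    refine ⟨m - w / 2, fun j hj => ?_⟩
    obtain ⟨z, hz, hmz, hzm⟩ := hm j hj
    have hzm' : (z : ℝ) ≤ m := by exact_mod_cast hzm
    exact ⟨z, hz, abs_le.mpr ⟨by linarith, by linarith⟩⟩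

theorem dist_circlePoint_le_iff (n : ℕ) [NeZero n] (i : Fin n) (c ε : ℝ) :
    dist (circlePoint n i) ((c / n : ℝ) : AddCircle (1 : ℝ)) ≤ ε ↔
      ∃ z : ℤ, z ≡ (i : ℕ) [ZMOD n] ∧ |(z : ℝ) - c| ≤ n * ε := by
  have hn : (0 : ℝ) < n := mod_cast NeZero.pos n
  have key (k : ℤ) : |((i : ℕ) : ℝ) / n - (c / n + k * 1)| ≤ ε ↔
      |(((i : ℕ) - k * n : ℤ) : ℝ) - c| ≤ n * ε := by
    rw [show ((i : ℕ) : ℝ) / n - (c / n + k * 1) = ((((i : ℕ) - k * n : ℤ) : ℝ) - c) / n by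
        push_cast; field_simp; ring,
      abs_div, Nat.abs_cast, div_le_iff₀ hn, mul_comm ε]
  rw [circlePoint, AddCircle.dist_coe_le_iff]
  constructor
  · rintro ⟨k, hk⟩
    exact ⟨(i : ℕ) - k * n, Int.modEq_iff_dvd.mpr ⟨k, by ring⟩, (key k).mp hk⟩
  · rintro ⟨z, hz, hzc⟩
    obtain ⟨k, hk⟩ := Int.modEq_iff_dvd.mp hz
    refine ⟨k, (key k).mpr ?_⟩
    rwa [show ((i : ℕ) : ℤ) - k * n = z by linarith]

section

open Fin.CommRing

theorem cycOmega_intCast (n : ℕ) [NeZero n] (i : Fin n) (m : ℤ) :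
    cycOmega n i (m : Fin n) = (((m - (i : ℕ)) % n : ℤ) : ℝ) := by
  have hn : (n : ℤ) ≠ 0 := by exact_mod_cast NeZero.ne n
  rw [cycOmega, show (m : Fin n) - i = ((m - (i : ℕ) : ℤ) : Fin n) by simp, Fin.val_intCast,
    ← Int.cast_natCast, Int.toNat_of_nonneg (Int.emod_nonneg _ hn)]

theorem Fin.intCast_surjective (n : ℕ) [NeZero n] : Function.Surjective (Int.cast : ℤ → Fin n) :=
  fun x => ⟨(x : ℕ), by simp⟩

end

theorem cech_eq_dowker_general (n : ℕ) [NeZero n] (δ : ℝ) :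
    cechCircle n (δ / 2) = dowkerSink (cycOmega n) (n * δ) := by
  have hn : (n : ℤ) ≠ 0 := by exact_mod_cast NeZero.ne n
  have hscale : Function.Surjective fun c : ℝ => ((c / n : ℝ) : AddCircle (1 : ℝ)) := by
    intro y
    obtain ⟨t, rfl⟩ := QuotientAddGroup.mk_surjective y
    exact ⟨t * n, congrArg _ (mul_div_cancel_right₀ t (Nat.cast_ne_zero.mpr (NeZero.ne n)))⟩
  ext σ
  refine and_congr_right fun _ => ?_
  calc (∃ c : AddCircle (1 : ℝ), ∀ i ∈ σ, dist (circlePoint n i) c ≤ δ / 2)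
      ↔ ∃ c : ℝ, ∀ i ∈ σ, ∃ z : ℤ, z ≡ (i : ℕ) [ZMOD n] ∧ |(z : ℝ) - c| ≤ n * δ / 2 := by
        simp_rw [hscale.exists, dist_circlePoint_le_iff, mul_div_assoc]
    _ ↔ ∃ m : ℤ, ∀ i ∈ σ, ∃ z : ℤ, z ≡ (i : ℕ) [ZMOD n] ∧ (m : ℝ) - n * δ ≤ z ∧ z ≤ m :=
        exists_real_window_iff_exists_int_window (σ : Set (Fin n)) _ _
    _ ↔ ∃ m : ℤ, ∀ i ∈ σ, (((m - (i : ℕ)) % n : ℤ) : ℝ) ≤ n * δ := by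
        simp_rw [Int.exists_modEq_mem_window_iff hn]
    _ ↔ ∃ x' : Fin n, ∀ i ∈ σ, cycOmega n i x' ≤ n * δ := by
        simp_rw [(Fin.intCast_surjective n).exists, cycOmega_intCast]

/-- **The Čech complex of `n` equally spaced points on the unit-circumference circle at
radius `δ/2` equals the Dowker sink complex of the cycle network `G_n` at resolution `nδ`,
for every `δ ∈ [0,1]`.** -/
theorem cech_eq_dowker (n : ℕ) [NeZero n] (δ : ℝ) (h0 : 0 ≤ δ) (h1 : δ ≤ 1) :
    cechCircle n (δ / 2) = dowkerSink (cycOmega n) (n * δ) :=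
  cech_eq_dowker_general n δ
end
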